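/- arXiv:2506.20363 — 7 statements merged into one kernel-verified Lean document; each statement's English description precedes it below -/
import Mathlib

section
/- Let g, m, N, b be integers with 0 ≤ m ≤ g, N ≥ g and b ≥ 1, set r = N − g + 1, and let p be an integer with p > −r. Then the coefficient of x^{N−m} in the formal power series e^{px} · T(x)^r · (T(x) + (b−1)x)^{g−m} ∈ ℚ[[x]] (where for p < 0 one sets e^{px} := (e^{−x})^{−p}, noting e^{x} is invertible in ℚ[[x]]) equals Σ_{k=m}^{g} C(g−m, k−m) · C(N−g+p, k−g+p) · b^{k−m}, with the convention that any term with k−g+p < 0 vanishes. (Equivalently, this is the coefficient of x^{r−1} in the Laurent expansion of e^{px}·td^r(x)·(td(x)/x + b − 1)^{g−m}.) -/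
/-!
Put `v = e^x - 1` and `S = e^(-x) T`, so that `S v = x` and `v' = 1 + v`.  Then
`e^(px) T^(N-g+1) (T + (b-1)x)^(g-m) = (1+v)^M (1+bv)^(g-m) · S^(N-m+1) · v'` with `M = N-g+p ≥ 0`.
For a polynomial `P`, the coefficient of `x^n` in `P(v) S^(n+1) v'` is the residue of
`P(v) v' / v^(n+1)`, which by the change of variables `v ↦ x` is the coefficient of `x^n` in `P`.
So the coefficient sought is that of `x^(N-m)` in `(1+x)^M (1+bx)^(g-m)`, a Vandermonde-type sum.
-/

open PowerSeries

/-- The formal power series `e^(p·x) ∈ ℚ[[x]]` for an integer `p`: for `p ≥ 0` it is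
`(e^x)^p`, and for `p < 0` it is `(e^(-x))^(-p)`. -/
noncomputable def expZ (p : ℤ) : PowerSeries ℚ :=
  if 0 ≤ p then (PowerSeries.exp ℚ) ^ p.toNat
  else (PowerSeries.rescale (-1) (PowerSeries.exp ℚ)) ^ (-p).toNat

namespace PowerSeries

section Lagrange

variable {K : Type*} [Field K] [CharZero K] {S v : K⟦X⟧}

theorem coeff_pow_succ_mul_derivative (hSv : S * v = X) (hv : constantCoeff v = 0) (s : ℕ) :
    coeff s (S ^ (s + 1) * d⁄dX K v) = if s = 0 then 1 else 0 := by
  rcases s with _ | t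
  · have h1 := congrArg (coeff 1) hSv
    rw [coeff_one_X, coeff_mul, Finset.Nat.sum_antidiagonal_eq_sum_range_succ_mk] at h1
    simp only [Finset.sum_range_succ, Finset.sum_range_zero, coeff_zero_eq_constantCoeff_apply,
      hv, mul_zero, zero_add, add_zero, Nat.sub_zero, Nat.sub_self] at h1
    rw [if_pos rfl, zero_add, pow_one, ← h1, ← coeff_zero_eq_constantCoeff_apply, coeff_mul]
    simp [coeff_derivative, coeff_zero_eq_constantCoeff_apply]
  · have hd : S * d⁄dX K v = 1 - v * d⁄dX K S := by
      have := congrArg (d⁄dX K) hSv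
      rw [Derivation.leibniz, derivative_X, smul_eq_mul, smul_eq_mul] at this
      linear_combination this
    have hsplit : S ^ (t + 2) * d⁄dX K v = S ^ (t + 1) - X * (S ^ t * d⁄dX K S) := by
      rw [← hSv]; linear_combination S ^ (t + 1) * hd
    -- `S^t S'` is the derivative of `S^(t+1) / (t+1)`, and derivatives have no residue
    have hres : ((t : K) + 1) * coeff t (S ^ t * d⁄dX K S) =
        ((t : K) + 1) * coeff (t + 1) (S ^ (t + 1)) := by
      have := congrArg (coeff t) (Derivation.leibniz_pow (d⁄dX K) (a := S) (t + 1))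
      rw [coeff_derivative, Nat.add_sub_cancel, smul_eq_mul, ← Nat.cast_smul_eq_nsmul K,
        map_smul, smul_eq_mul] at this
      push_cast at this
      linear_combination -this
    rw [if_neg t.succ_ne_zero, hsplit, map_sub, coeff_succ_X_mul,
      mul_left_cancel₀ (Nat.cast_add_one_ne_zero t) hres, sub_self]

theorem coeff_pow_mul_pow_succ_mul_derivative (hSv : S * v = X) (hv : constantCoeff v = 0)
    (k n : ℕ) : coeff n (v ^ k * S ^ (n + 1) * d⁄dX K v) = if k = n then 1 else 0 := by
  rcases le_or_gt k n with hkn | hnk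
  · obtain ⟨s, rfl⟩ := Nat.exists_eq_add_of_le hkn
    have hpow : v ^ k * S ^ (k + s + 1) = X ^ k * S ^ (s + 1) := by
      rw [← hSv, mul_pow, show k + s + 1 = k + (s + 1) by omega, pow_add]; ring
    rw [hpow, mul_assoc, coeff_X_pow_mul', if_pos hkn, Nat.add_sub_cancel_left,
      coeff_pow_succ_mul_derivative hSv hv]
    simp
  · have hdvd : (X : K⟦X⟧) ^ (n + 1) ∣ v ^ k * S ^ (n + 1) * d⁄dX K v :=
      ((pow_dvd_pow_of_dvd (X_dvd_iff.mpr hv) _).trans (pow_dvd_pow v hnk)).mul_right _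
        |>.mul_right _
    rw [X_pow_dvd_iff.mp hdvd n (by omega), if_neg hnk.ne']

theorem coeff_aeval_mul_pow_succ_mul_derivative (hSv : S * v = X) (hv : constantCoeff v = 0)
    (P : Polynomial K) (n : ℕ) :
    coeff n (Polynomial.aeval v P * S ^ (n + 1) * d⁄dX K v) = P.coeff n := by
  induction P using Polynomial.induction_on' with
  | add P Q hP hQ => simp only [map_add, add_mul, hP, hQ, Polynomial.coeff_add]
  | monomial k c =>
    rw [Polynomial.aeval_monomial, Polynomial.coeff_monomial, mul_assoc, mul_assoc,
      ← mul_assoc (v ^ k), algebraMap_eq, coeff_C_mul,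
      coeff_pow_mul_pow_succ_mul_derivative hSv hv]
    simp [eq_comm]

end Lagrange

end PowerSeries

theorem Polynomial.coeff_one_add_X_pow_mul_one_add_C_mul_X_pow {R : Type*} [CommSemiring R]
    (c : R) {d n : ℕ} (hdn : d ≤ n) (M : ℕ) :
    ((1 + Polynomial.X) ^ M * (1 + Polynomial.C c * Polynomial.X) ^ d).coeff n =
      ∑ i ∈ Finset.range (d + 1), d.choose i * c ^ i * M.choose (n - i) := by
  rw [add_comm 1 (Polynomial.C c * _), add_pow (Polynomial.C c * Polynomial.X) 1 d,
    Finset.mul_sum, Polynomial.finsetSum_coeff]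
  refine Finset.sum_congr rfl fun i hi => ?_
  have hterm : (1 + Polynomial.X) ^ M *
      ((Polynomial.C c * Polynomial.X) ^ i * 1 ^ (d - i) * (d.choose i : Polynomial R)) =
      Polynomial.C (d.choose i * c ^ i) * (Polynomial.X ^ i * (1 + Polynomial.X) ^ M) := by
    simp only [map_mul, map_pow, map_natCast]; ring
  rw [hterm, Polynomial.coeff_C_mul, Polynomial.coeff_X_pow_mul',
    if_pos ((Finset.mem_range_succ_iff.mp hi).trans hdn), Polynomial.coeff_one_add_X_pow]

theorem Nat.choose_eq_ite_choose_toNat {a : ℤ} {M j : ℕ} (h : a + j = M) :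
    M.choose j = if a < 0 then 0 else M.choose a.toNat := by
  split_ifs with ha
  · exact Nat.choose_eq_zero_of_lt (by omega)
  · rw [← Nat.choose_symm (by omega : j ≤ M)]
    congr 1
    omega

theorem expZ_eq_zpow (p : ℤ) : expZ p = ((isUnit_exp ℚ).unit ^ p : (ℚ⟦X⟧)ˣ) := by
  have hinv : (((isUnit_exp ℚ).unit⁻¹ : (ℚ⟦X⟧)ˣ) : ℚ⟦X⟧) = rescale (-1) (exp ℚ) :=
    Units.inv_eq_of_mul_eq_one_right exp_mul_exp_neg_eq_one
  unfold expZ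
  split_ifs with hp
  · lift p to ℕ using hp
    simp
  · obtain ⟨j, rfl⟩ : ∃ j : ℕ, p = -j := ⟨(-p).toNat, by omega⟩
    simp [← hinv]

theorem expZ_mul_exp_pow {p : ℤ} {r M : ℕ} (h : p + r = M) : expZ p * exp ℚ ^ r = exp ℚ ^ M := by
  have hexp (k : ℕ) : exp ℚ ^ k = (((isUnit_exp ℚ).unit ^ (k : ℤ) : (ℚ⟦X⟧)ˣ) : ℚ⟦X⟧) := by simp
  rw [expZ_eq_zpow, hexp, hexp, ← Units.val_mul, ← zpow_add, h]

theorem coeff_expZ_mul_pow_mul_add_smul_X_pow {T : ℚ⟦X⟧}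
    (hT : T * (1 - rescale (-1) (exp ℚ)) = X) (c : ℚ) {p : ℤ} {r d n M : ℕ}
    (hM : p + r = M + 1) (hn : r + d = n + 1) :
    coeff n (expZ p * T ^ r * (T + (c - 1) • X) ^ d) =
      ((1 + Polynomial.X) ^ M * (1 + Polynomial.C c * Polynomial.X) ^ d).coeff n := by
  have hexp : exp ℚ * rescale (-1) (exp ℚ) = 1 := exp_mul_exp_neg_eq_one
  set v := exp ℚ - 1
  set S := T * rescale (-1) (exp ℚ)
  have hSv : S * v = X := by rw [← hT]; linear_combination T * hexp
  have hT' : T = exp ℚ * S := by linear_combination -T * hexp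
  have hv0 : constantCoeff v = 0 := by simp [v]
  have hv1 : 1 + v = exp ℚ := by simp [v]
  have hv' : d⁄dX ℚ v = exp ℚ := by simp [v, derivative_exp]
  clear_value v S
  have hbase : T + (c - 1) • X = S * (1 + C c * v) := by
    rw [smul_eq_C_mul, ← hSv, hT', ← hv1, map_sub, map_one]; ring
  have hprod : expZ p * T ^ r * (T + (c - 1) • X) ^ d =
      Polynomial.aeval v ((1 + Polynomial.X) ^ M * (1 + Polynomial.C c * Polynomial.X) ^ d) *
        S ^ (n + 1) * d⁄dX ℚ v := by
    rw [hbase, hT', mul_pow, mul_pow, hv', ← hn]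
    simp only [map_mul, map_pow, map_add, map_one, Polynomial.aeval_X, Polynomial.aeval_C,
      algebraMap_eq, hv1]
    linear_combination (S ^ r * S ^ d * (1 + C c * v) ^ d) * expZ_mul_exp_pow hM
  rw [hprod, coeff_aeval_mul_pow_succ_mul_derivative hSv hv0]

theorem coeff_laughlin_chern_general (g m N b : ℕ) (hm : m ≤ g) (hN : g ≤ N)
    (p : ℤ) (hp : p > -((N : ℤ) - g + 1))
    (T : PowerSeries ℚ)
    (hT : T * (1 - PowerSeries.rescale (-1) (PowerSeries.exp ℚ)) = PowerSeries.X) :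
    PowerSeries.coeff (R := ℚ) (N - m)
      (expZ p * T ^ (N - g + 1) * (T + ((b : ℚ) - 1) • PowerSeries.X) ^ (g - m)) =
    ∑ k ∈ Finset.Icc m g,
      ((g - m).choose (k - m) : ℚ) *
        (if (k : ℤ) - g + p < 0 then 0
          else (((N : ℤ) - g + p).toNat.choose ((k : ℤ) - g + p).toNat : ℚ)) *
        (b : ℚ) ^ (k - m) := by
  obtain ⟨M, hM⟩ : ∃ M : ℕ, (N : ℤ) - g + p = M := ⟨_, (Int.toNat_of_nonneg (by omega)).symm⟩
  rw [coeff_expZ_mul_pow_mul_add_smul_X_pow hT _ (M := M) (by omega) (by omega),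
    Polynomial.coeff_one_add_X_pow_mul_one_add_C_mul_X_pow _ (by omega),
    ← Finset.Ico_add_one_right_eq_Icc, Finset.sum_Ico_eq_sum_range,
    show g + 1 - m = g - m + 1 by omega]
  refine Finset.sum_congr rfl fun i hi => ?_
  rw [hM, Nat.choose_eq_ite_choose_toNat (M := M) (j := N - m - i) (a := (↑(m + i) : ℤ) - g + p)
    (by have := Finset.mem_range_succ_iff.mp hi; omega)]
  push_cast
  simp only [Nat.add_sub_cancel_left, Int.toNat_natCast]
  ring

/-- Let `0 ≤ m ≤ g ≤ N`, `b ≥ 1`, `r = N - g + 1`, and let `p` be an integer with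
`p > -r`.  Then the coefficient of `x^(N-m)` in
`e^(p·x) · T(x)^r · (T(x) + (b-1)·x)^(g-m)`,
where `T` is the Todd power series (the unique power series with
`T(x)·(1 - e^(-x)) = x`), equals
`∑_{k=m}^{g} C(g-m, k-m) · C(N-g+p, k-g+p) · b^(k-m)`,
with the convention that terms with `k-g+p < 0` vanish. -/
theorem coeff_laughlin_chern (g m N b : ℕ) (hm : m ≤ g) (hN : g ≤ N) (hb : 1 ≤ b)
    (p : ℤ) (hp : p > -((N : ℤ) - g + 1))
    (T : PowerSeries ℚ)
    (hT : T * (1 - PowerSeries.rescale (-1) (PowerSeries.exp ℚ)) = PowerSeries.X) :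
    PowerSeries.coeff (R := ℚ) (N - m)
      (expZ p * T ^ (N - g + 1) * (T + ((b : ℚ) - 1) • PowerSeries.X) ^ (g - m)) =
    ∑ k ∈ Finset.Icc m g,
      ((g - m).choose (k - m) : ℚ) *
        (if (k : ℤ) - g + p < 0 then 0
          else (((N : ℤ) - g + p).toNat.choose ((k : ℤ) - g + p).toNat : ℚ)) *
        (b : ℚ) ^ (k - m) :=
  coeff_laughlin_chern_general g m N b hm hN p hp T hT
end

section
/- For every integer r ≥ 1, the coefficient of x^{r−1} in the formal power series T(x)^r ∈ ℚ[[x]] equals 1. -/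
/-!
The Todd series `T = x / (1 - e^{-x})` satisfies the Riccati equation `x T' = T - T² + x T`,
because `f = 1 - e^{-x}` satisfies `f' = 1 - f`. Multiplying by `(n + 1) Tⁿ` turns it into
`x (T^{n+1})' = (n + 1) (T^{n+1} - T^{n+2} + x T^{n+1})`, whose coefficient of `x^{n+1}` says
`[x^{n+1}] T^{n+2} = [x^n] T^{n+1}`. So these coefficients are all equal to `[x^0] T = 1`.
-/

open PowerSeries

namespace PowerSeries

theorem derivative_rescale {R : Type*} [CommSemiring R] (a : R) (f : R⟦X⟧) :
    d⁄dX R (rescale a f) = C a * rescale a (d⁄dX R f) := by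
  ext n
  simp only [coeff_derivative, coeff_rescale, coeff_C_mul]
  ring

theorem derivative_one_sub_exp_neg (A : Type*) [CommRing A] [Algebra ℚ A] :
    d⁄dX A (1 - rescale (-1) (exp A)) = rescale (-1) (exp A) := by
  simp [derivative_rescale, derivative_exp]

section CommRing

variable {R : Type*} [CommRing R] {T f : R⟦X⟧}

theorem X_mul_derivative_eq_of_mul_eq_X (hT : T * f = X) (hf : d⁄dX R f = 1 - f) :
    X * d⁄dX R T = T - T ^ 2 + X * T := by
  have hD : T * (1 - f) + f * d⁄dX R T = 1 := by
    simpa [Derivation.leibniz, hf] using congrArg (d⁄dX R) hT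
  linear_combination T * hD + (T - d⁄dX R T) * hT

theorem constantCoeff_eq_one_of_mul_eq_X (hT : T * f = X) (h0 : constantCoeff f = 0)
    (h1 : coeff 1 f = 1) : constantCoeff T = 1 := by
  simpa [coeff_mul, Finset.Nat.antidiagonal_succ, h0, h1] using congrArg (coeff 1) hT

theorem coeff_succ_pow_succ_succ_of_riccati [IsAddTorsionFree R]
    (h : X * d⁄dX R T = T - T ^ 2 + X * T) (n : ℕ) :
    coeff (n + 1) (T ^ (n + 2)) = coeff n (T ^ (n + 1)) := by
  have hpow : X * d⁄dX R (T ^ (n + 1)) =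
      (n + 1) • (T ^ (n + 1) - T ^ (n + 2) + X * T ^ (n + 1)) := by
    rw [derivative_pow, nsmul_eq_mul]
    push_cast
    linear_combination ((n + 1 : R⟦X⟧) * T ^ n) * h
  have hcoeff := congrArg (coeff (n + 1)) hpow
  rw [coeff_succ_X_mul, coeff_derivative, map_nsmul, map_add, map_sub, coeff_succ_X_mul]
    at hcoeff
  refine (sub_eq_zero.mp (nsmul_right_injective n.succ_ne_zero ?_)).symm
  simp only [nsmul_eq_mul, smul_zero] at hcoeff ⊢
  push_cast at hcoeff ⊢
  linear_combination -hcoeff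

theorem coeff_pow_succ_eq_one_of_riccati [IsAddTorsionFree R]
    (h : X * d⁄dX R T = T - T ^ 2 + X * T) (h0 : constantCoeff T = 1) (n : ℕ) :
    coeff n (T ^ (n + 1)) = 1 := by
  induction n with
  | zero => simpa using h0
  | succ n ih => rw [coeff_succ_pow_succ_succ_of_riccati h, ih]

end CommRing

end PowerSeries

theorem coeff_todd_pow_self_general (r : ℕ)
    (T : PowerSeries ℚ)
    (hT : T * (1 - PowerSeries.rescale (-1) (PowerSeries.exp ℚ)) = PowerSeries.X) :
    PowerSeries.coeff (r - 1) (T ^ r) = 1 := by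
  have hriccati := X_mul_derivative_eq_of_mul_eq_X hT (by
    rw [derivative_one_sub_exp_neg, sub_sub_cancel])
  have h0 : constantCoeff T = 1 := constantCoeff_eq_one_of_mul_eq_X hT
    (by simp [← coeff_zero_eq_constantCoeff]) (by simp)
  cases r with
  | zero => simp -- `0 - 1 = 0` in ℕ, so this case reads `coeff 0 1 = 1`
  | succ n => simpa using coeff_pow_succ_eq_one_of_riccati hriccati h0 n

/-- For every integer `r ≥ 1`, the coefficient of `x^(r-1)` in `T(x)^r` equals `1`,
where `T` is the Todd power series, the unique power series with
`T(x) * (1 - e^(-x)) = x`. -/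
theorem coeff_todd_pow_self (r : ℕ) (hr : 1 ≤ r)
    (T : PowerSeries ℚ)
    (hT : T * (1 - PowerSeries.rescale (-1) (PowerSeries.exp ℚ)) = PowerSeries.X) :
    PowerSeries.coeff (r - 1) (T ^ r) = 1 :=
  coeff_todd_pow_self_general r T hT
end

section
/- Let r ≥ 1 be an integer and let p be an integer with p > −r. Then the coefficient of x^{r−1} in the formal power series e^{px} · T(x)^r ∈ ℚ[[x]] (where for p < 0 one sets e^{px} := (e^{−x})^{−p}) equals the binomial coefficient C(r−1+p, p) when p ≥ 0, and equals 0 when −r < p < 0. -/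
/-!
Write `a(p, m)` for the coefficient of `x^m` in `e^{px} T^{m+1}`. Multiplying by `e^{-x}` and using
`e^{-x} T = T - x` gives Pascal's rule `a(p, m+1) = a(p-1, m+1) + a(p, m)`. Together with
`a(p, 0) = 1` and `a(0, m) = 1` this forces `a(p, m) = binom(m + p, m)` for every integer `p`, a
generalized binomial coefficient that equals `C(m+p, p)` for `p ≥ 0` and vanishes for
`-m ≤ p < 0`. The normalization `a(0, m) = 1` comes from the differential equation
`x T' = T + x T - T²`: comparing coefficients of `x^{n+1}` in `x (T^{n+1})'` shows that the
coefficient of `x^n` in `T^{n+1}` does not depend on `n`.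
-/

open PowerSeries

theorem PowerSeries.derivative_rescale_s2 {R : Type*} [CommSemiring R] (a : R) (f : R⟦X⟧) :
    d⁄dX R (rescale a f) = C a * rescale a (d⁄dX R f) := by
  ext n
  simp only [coeff_derivative, coeff_rescale, coeff_C_mul, pow_succ]
  ring

theorem PowerSeries.derivative_rescale_neg_one_exp (A : Type*) [CommRing A] [Algebra ℚ A] :
    d⁄dX A (rescale (-1) (exp A)) = -rescale (-1) (exp A) := by
  rw [derivative_rescale_s2, derivative_exp, map_neg, map_one, neg_one_mul]

theorem PowerSeries.constantCoeff_rescale {R : Type*} [CommSemiring R] (a : R) (f : R⟦X⟧) :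
    constantCoeff (rescale a f) = constantCoeff f := by
  rw [← coeff_zero_eq_constantCoeff_apply, coeff_rescale, pow_zero, one_mul,
    coeff_zero_eq_constantCoeff_apply]

theorem constantCoeff_expZ (p : ℤ) : constantCoeff (expZ p) = 1 := by
  unfold expZ
  split_ifs <;> simp [constantCoeff_rescale]

theorem expZ_zero : expZ 0 = 1 := by
  simp [expZ]

theorem expZ_sub_one (p : ℤ) : expZ (p - 1) = expZ p * rescale (-1) (exp ℚ) := by
  have hexp : exp ℚ * rescale (-1) (exp ℚ) = 1 := exp_mul_exp_neg_eq_one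
  unfold expZ
  rcases lt_or_ge 0 p with hp | hp
  · rw [if_pos (by omega), if_pos hp.le, show p.toNat = (p - 1).toNat + 1 by omega, pow_succ,
      mul_assoc, hexp, mul_one]
  · rw [if_neg (by omega), show (-(p - 1)).toNat = (-p).toNat + 1 by omega, pow_succ]
    split_ifs
    · simp [show p = 0 by omega]
    · rfl

section Todd

variable {T : ℚ⟦X⟧} (hT : T * (1 - rescale (-1) (exp ℚ)) = X)
include hT

theorem constantCoeff_todd : constantCoeff T = 1 := by
  have h := congrArg (coeff 1) hT
  simpa [coeff_mul, Finset.Nat.sum_antidiagonal_eq_sum_range_succ_mk, Finset.sum_range_succ,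
    coeff_rescale] using h

theorem X_mul_derivative_todd : X * d⁄dX ℚ T = T + X * T - T ^ 2 := by
  have h := congrArg (d⁄dX ℚ) hT
  rw [Derivation.leibniz, derivative_X, map_sub, Derivation.map_one_eq_zero,
    derivative_rescale_neg_one_exp, smul_eq_mul, smul_eq_mul] at h
  linear_combination T * h + (T - d⁄dX ℚ T) * hT

theorem X_mul_derivative_todd_pow (n : ℕ) :
    X * d⁄dX ℚ (T ^ (n + 1)) = (n + 1 : ℚ) • (T ^ (n + 1) + X * T ^ (n + 1) - T ^ (n + 2)) := by
  rw [derivative_pow, Nat.add_sub_cancel, smul_eq_C_mul, map_add, map_one, map_natCast]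
  push_cast
  linear_combination ((n + 1) * T ^ n) * X_mul_derivative_todd hT

theorem coeff_todd_pow_succ (n : ℕ) : coeff n (T ^ (n + 1)) = 1 := by
  induction n with
  | zero => simpa using constantCoeff_todd hT
  | succ n ih =>
    have h := congrArg (coeff (n + 1)) (X_mul_derivative_todd_pow hT n)
    rw [coeff_succ_X_mul, coeff_derivative, coeff_smul, map_sub, map_add, coeff_succ_X_mul, ih,
      smul_eq_mul] at h
    have key : (n + 1 : ℚ) * (coeff (n + 1) (T ^ (n + 2)) - 1) = 0 := by linear_combination h
    simpa [sub_eq_zero, Nat.cast_add_one_ne_zero] using key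

theorem expZ_sub_one_mul_todd_pow_succ (p : ℤ) (m : ℕ) :
    expZ (p - 1) * T ^ (m + 1) = expZ p * T ^ (m + 1) - X * (expZ p * T ^ m) := by
  rw [expZ_sub_one]
  linear_combination -(expZ p * T ^ m) * hT

theorem coeff_expZ_mul_todd_pow_pascal (p : ℤ) (m : ℕ) :
    coeff (m + 1) (expZ p * T ^ (m + 2)) =
      coeff (m + 1) (expZ (p - 1) * T ^ (m + 2)) + coeff m (expZ p * T ^ (m + 1)) := by
  rw [expZ_sub_one_mul_todd_pow_succ hT, map_sub, coeff_succ_X_mul, sub_add_cancel]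

theorem coeff_expZ_mul_todd_pow_succ (p : ℤ) (m : ℕ) :
    coeff m (expZ p * T ^ (m + 1)) = Ring.choose ((m : ℚ) + p) m := by
  induction m generalizing p with
  | zero => simp [constantCoeff_expZ, constantCoeff_todd hT]
  | succ m ih =>
    induction p using Int.inductionOn' (b := 0) with
    | zero =>
      simp only [expZ_zero, one_mul, Int.cast_zero, add_zero, Ring.choose_natCast,
        Nat.choose_self, Nat.cast_one]
      exact coeff_todd_pow_succ hT (m + 1)
    | succ p _ hp =>
      rw [coeff_expZ_mul_todd_pow_pascal hT, add_sub_cancel_right, hp, ih]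
      push_cast
      rw [show (m : ℚ) + 1 + (p + 1) = m + p + 1 + 1 by ring, Ring.choose_succ_succ,
        add_right_comm, add_assoc (m : ℚ), add_comm]
    | pred p _ hp =>
      rw [coeff_expZ_mul_todd_pow_pascal hT, ih] at hp
      push_cast at hp ⊢
      rw [add_right_comm, Ring.choose_succ_succ] at hp
      rw [show (m : ℚ) + 1 + (p - 1) = m + p by ring]
      linear_combination hp

end Todd

/-- Let `r ≥ 1` and let `p` be an integer with `p > -r`.  The coefficient of
`x^(r-1)` in `e^(p·x) · T(x)^r`, where `T` is the Todd power series (the unique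
power series with `T(x)·(1 - e^(-x)) = x`), equals the binomial coefficient
`C(r-1+p, p)` when `p ≥ 0`, and equals `0` when `-r < p < 0`. -/
theorem coeff_exp_mul_todd_pow (r : ℕ) (hr : 1 ≤ r) (p : ℤ) (hp : p > -(r : ℤ))
    (T : PowerSeries ℚ)
    (hT : T * (1 - PowerSeries.rescale (-1) (PowerSeries.exp ℚ)) = PowerSeries.X) :
    (0 ≤ p → PowerSeries.coeff (r - 1) (expZ p * T ^ r) =
      ((r - 1 + p.toNat).choose p.toNat : ℚ)) ∧
    (p < 0 → PowerSeries.coeff (r - 1) (expZ p * T ^ r) = 0) := by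
  obtain ⟨s, rfl⟩ : ∃ s, r = s + 1 := ⟨r - 1, by omega⟩
  rw [Nat.add_sub_cancel, coeff_expZ_mul_todd_pow_succ hT]
  constructor
  · intro hp0
    lift p to ℕ using hp0
    rw [Int.toNat_natCast, Int.cast_natCast, ← Nat.cast_add, Ring.choose_natCast,
      Nat.choose_symm_add]
  · intro hneg
    obtain ⟨n, hn, hns⟩ : ∃ n : ℕ, (s : ℤ) + p = n ∧ n < s := ⟨(s + p).toNat, by omega, by omega⟩
    rw [show (s : ℚ) + p = n by exact_mod_cast hn, Ring.choose_natCast,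
      Nat.choose_eq_zero_of_lt hns, Nat.cast_zero]
end

section
/- Let r ≥ 1, s ≥ 0, p ≥ 0, b ≥ 1 be integers. Then in ℚ[[x]] the coefficient of x^{r+s−1} in e^{px} · T(x)^r · (T(x) + (b−1)x)^s equals the coefficient of x^{r+s−1} in (1 + (b−1)x)^s · (1−x)^{−(p+1)}, where (1−x)^{−1} denotes the multiplicative inverse of the invertible power series 1−x. (This is the change of variables z = 1 − e^{−x} in the residue computation.) -/
/-!
Put `z = 1 - e^{-x}`. Then `T = x / z`, `dz = e^{-x} dx` and `e^x = (1 - z)⁻¹`, so the coefficient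
of `x^m` in `e^{qx} e^{-x} T^{m+1}` is the residue of `e^{qx} dz / z^{m+1}`, i.e. the coefficient
of `z^m` in `(1 - z)^{-q}`. Formally this goes by induction on `m` and `q`, using
`e^x = 1 + z e^x` against `(1 - x)⁻¹ = 1 + x (1 - x)⁻¹`; the case `q = 0` is the vanishing of the
residue of `dz / z^{m+1}` for `m ≥ 1`, obtained by differentiating `T z = x`. Since
`z^k T^{m+1} = x^k T^{m+1-k}`, the identity extends to a polynomial factor in `z`, and the
theorem is the case `T + (b - 1) x = T (1 + (b - 1) z)`, `e^{px} = e^{(p+1)x} e^{-x}`.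
-/

open PowerSeries

variable {K : Type*} [Field K] [CharZero K]

theorem derivative_evalNegHom_exp : d⁄dX K (evalNegHom (exp K)) = -evalNegHom (exp K) := by
  have h := congrArg (d⁄dX K) (exp_mul_exp_neg_eq_one (A := K))
  rw [Derivation.leibniz, derivative_exp, Derivation.map_one_eq_zero, smul_eq_mul,
    smul_eq_mul] at h
  have h' : exp K * (d⁄dX K (evalNegHom (exp K)) + evalNegHom (exp K)) = 0 := by
    linear_combination h
  exact eq_neg_of_add_eq_zero_left ((mul_eq_zero.mp h').resolve_left (isUnit_exp K).ne_zero)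

theorem constantCoeff_evalNegHom_exp : constantCoeff (evalNegHom (exp K)) = 1 := by
  simpa using congrArg constantCoeff (exp_mul_exp_neg_eq_one (A := K))

theorem coeff_pow_mul_derivative (g : K⟦X⟧) (k : ℕ) :
    coeff k (g ^ k * d⁄dX K g) = coeff (k + 1) (g ^ (k + 1)) := by
  have h := congrArg (coeff k) (derivative_pow g (k + 1))
  rw [coeff_derivative, Nat.add_sub_cancel, mul_assoc, ← map_natCast (C (R := K)), coeff_C_mul,
    Nat.cast_succ, mul_comm] at h
  exact (mul_left_cancel₀ (Nat.cast_add_one_ne_zero k) h).symm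

abbrev IsTodd (T : K⟦X⟧) : Prop := T * (1 - evalNegHom (exp K)) = X

namespace IsTodd

variable {T : K⟦X⟧}

theorem mul_add_mul_derivative (hT : IsTodd T) :
    T * evalNegHom (exp K) + (1 - evalNegHom (exp K)) * d⁄dX K T = 1 := by
  have h := congrArg (d⁄dX K) hT
  rw [Derivation.leibniz, derivative_X, map_sub, derivative_evalNegHom_exp,
    Derivation.map_one_eq_zero, smul_eq_mul, smul_eq_mul] at h
  linear_combination h

theorem constantCoeff_eq_one (hT : IsTodd T) : constantCoeff T = 1 := by
  simpa [constantCoeff_evalNegHom_exp] using congrArg constantCoeff hT.mul_add_mul_derivative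

theorem coeff_succ_evalNegHom_exp_mul_pow (hT : IsTodd T) (k : ℕ) :
    coeff (k + 1) (evalNegHom (exp K) * T ^ (k + 2)) = 0 := by
  have h : evalNegHom (exp K) * T ^ (k + 2) = T ^ (k + 1) - X * (T ^ k * d⁄dX K T) := by
    linear_combination T ^ (k + 1) * hT.mul_add_mul_derivative - T ^ k * d⁄dX K T * hT
  rw [h, map_sub, coeff_succ_X_mul, coeff_pow_mul_derivative, sub_self]

theorem coeff_exp_pow_mul_evalNegHom_exp_mul_pow (hT : IsTodd T) (m q : ℕ) :
    coeff m (exp K ^ q * (evalNegHom (exp K) * T ^ (m + 1))) = coeff m ((1 - X)⁻¹ ^ q) := by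
  induction m generalizing q with
  | zero =>
    simp [constantCoeff_evalNegHom_exp, hT.constantCoeff_eq_one]
  | succ m ihm =>
    induction q with
    | zero => simpa using hT.coeff_succ_evalNegHom_exp_mul_pow m
    | succ q ihq =>
      have hexp : exp K ^ (q + 1) * (evalNegHom (exp K) * T ^ (m + 2)) =
          exp K ^ q * (evalNegHom (exp K) * T ^ (m + 2)) +
            X * (exp K ^ (q + 1) * (evalNegHom (exp K) * T ^ (m + 1))) := by
        linear_combination
          exp K ^ q * evalNegHom (exp K) * T ^ (m + 2) * exp_mul_exp_neg_eq_one (A := K) +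
            exp K ^ (q + 1) * evalNegHom (exp K) * T ^ (m + 1) * hT
      have hinv : ((1 - X : K⟦X⟧)⁻¹) ^ (q + 1) = (1 - X)⁻¹ ^ q + X * (1 - X)⁻¹ ^ (q + 1) := by
        linear_combination
          (1 - X : K⟦X⟧)⁻¹ ^ q * PowerSeries.mul_inv_cancel (1 - X : K⟦X⟧) (by simp)
      rw [hexp, hinv, map_add, map_add, coeff_succ_X_mul, coeff_succ_X_mul, ihq, ihm]

theorem coeff_one_sub_evalNegHom_exp_pow_mul (hT : IsTodd T) (k m q : ℕ) :
    coeff m ((1 - evalNegHom (exp K)) ^ k * (exp K ^ q * (evalNegHom (exp K) * T ^ (m + 1)))) =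
      coeff m (X ^ k * (1 - X)⁻¹ ^ q) := by
  obtain ⟨u, hu⟩ : X ∣ 1 - evalNegHom (exp K) :=
    X_dvd_iff.mpr (by simp [constantCoeff_evalNegHom_exp])
  have huT : u ^ k * T ^ k = 1 := by
    have h : X * (u * T) = X * 1 := by rw [mul_one, ← mul_assoc, ← hu, mul_comm]; exact hT
    rw [← mul_pow, mul_left_cancel₀ X_ne_zero h, one_pow]
  rw [hu, mul_pow, mul_assoc, coeff_X_pow_mul', coeff_X_pow_mul']
  split_ifs with hkm
  · obtain ⟨d, rfl⟩ := Nat.exists_eq_add_of_le' hkm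
    rw [Nat.add_sub_cancel, ← hT.coeff_exp_pow_mul_evalNegHom_exp_mul_pow d q]
    congr 1
    linear_combination exp K ^ q * evalNegHom (exp K) * T ^ (d + 1) * huT
  · rfl

theorem coeff_aeval_one_sub_evalNegHom_exp_mul (hT : IsTodd T) (P : Polynomial K) (m q : ℕ) :
    coeff m (Polynomial.aeval (1 - evalNegHom (exp K)) P *
        (exp K ^ q * (evalNegHom (exp K) * T ^ (m + 1)))) =
      coeff m ((P : K⟦X⟧) * (1 - X)⁻¹ ^ q) := by
  induction P using Polynomial.induction_on' with
  | add P Q hP hQ => rw [map_add, Polynomial.coe_add, add_mul, add_mul, map_add, map_add, hP, hQ]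
  | monomial k a =>
    rw [← Polynomial.C_mul_X_pow_eq_monomial, map_mul (Polynomial.aeval _), Polynomial.aeval_C,
      Polynomial.aeval_X_pow, Polynomial.coe_mul, Polynomial.coe_pow, Polynomial.coe_C,
      Polynomial.coe_X, algebraMap_eq, mul_assoc, mul_assoc, coeff_C_mul, coeff_C_mul,
      hT.coeff_one_sub_evalNegHom_exp_pow_mul]

end IsTodd

theorem coeff_todd_change_of_variables_general (r s p b : ℕ) (hr : 1 ≤ r)
    (T : PowerSeries ℚ)
    (hT : T * (1 - PowerSeries.rescale (-1) (PowerSeries.exp ℚ)) = PowerSeries.X) :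
    PowerSeries.coeff (R := ℚ) (r + s - 1)
      ((PowerSeries.exp ℚ) ^ p * T ^ r * (T + ((b : ℚ) - 1) • PowerSeries.X) ^ s) =
    PowerSeries.coeff (R := ℚ) (r + s - 1)
      ((1 + ((b : ℚ) - 1) • PowerSeries.X) ^ s * ((1 - PowerSeries.X)⁻¹) ^ (p + 1)) := by
  replace hT : T * (1 - evalNegHom (exp ℚ)) = X := hT
  obtain ⟨m, hm⟩ : ∃ m, r + s = m + 1 := ⟨r + s - 1, by omega⟩
  set c : ℚ := (b : ℚ) - 1
  set N := evalNegHom (exp ℚ)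
  set P : Polynomial ℚ := (1 + Polynomial.C c * Polynomial.X) ^ s
  have hP : (P : ℚ⟦X⟧) = (1 + c • X) ^ s := by
    rw [Polynomial.coe_pow, Polynomial.coe_add, Polynomial.coe_one, Polynomial.coe_mul,
      Polynomial.coe_C, Polynomial.coe_X, smul_eq_C_mul]
  have hlhs : exp ℚ ^ p * T ^ r * (T + c • X) ^ s =
      Polynomial.aeval (1 - N) P * (exp ℚ ^ (p + 1) * (N * T ^ (m + 1))) := by
    have hTc : T + c • X = T * (1 + c • (1 - N)) := by
      rw [mul_add, mul_one, mul_smul_comm, hT]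
    have hTpow : T ^ r * T ^ s = T ^ (m + 1) := by rw [← pow_add, hm]
    simp only [P, map_pow, map_add, map_one, map_mul (Polynomial.aeval _), Polynomial.aeval_C,
      Polynomial.aeval_X, ← Algebra.smul_def, hTc, mul_pow]
    linear_combination (exp ℚ ^ p * (1 + c • (1 - N)) ^ s) * hTpow -
      (exp ℚ ^ p * T ^ (m + 1) * (1 + c • (1 - N)) ^ s) * exp_mul_exp_neg_eq_one (A := ℚ)
  rw [hlhs, ← hP, hm, Nat.add_sub_cancel]
  exact IsTodd.coeff_aeval_one_sub_evalNegHom_exp_mul hT P m (p + 1)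

/-- Let `r ≥ 1`, `s ≥ 0`, `p ≥ 0`, `b ≥ 1` be integers.  Then in `ℚ[[x]]` the
coefficient of `x^(r+s-1)` in `e^(p·x) · T(x)^r · (T(x) + (b-1)·x)^s`, where `T`
is the Todd power series (the unique power series with `T(x)·(1 - e^(-x)) = x`),
equals the coefficient of `x^(r+s-1)` in `(1 + (b-1)·x)^s · (1-x)^(-(p+1))`,
where `(1-x)⁻¹` is the multiplicative inverse of `1 - x` in `ℚ[[x]]`. -/
theorem coeff_todd_change_of_variables (r s p b : ℕ) (hr : 1 ≤ r) (hb : 1 ≤ b)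
    (T : PowerSeries ℚ)
    (hT : T * (1 - PowerSeries.rescale (-1) (PowerSeries.exp ℚ)) = PowerSeries.X) :
    PowerSeries.coeff (R := ℚ) (r + s - 1)
      ((PowerSeries.exp ℚ) ^ p * T ^ r * (T + ((b : ℚ) - 1) • PowerSeries.X) ^ s) =
    PowerSeries.coeff (R := ℚ) (r + s - 1)
      ((1 + ((b : ℚ) - 1) • PowerSeries.X) ^ s * ((1 - PowerSeries.X)⁻¹) ^ (p + 1)) :=
  coeff_todd_change_of_variables_general r s p b hr T hT
end

section
/- Let ℓ, m ≥ 0 be integers with ℓ + m = g. Then in the exterior algebra Λ(V) one has θ^ℓ ∧ η^{2m} ∧ (θ′)^{g−m} = (−1)^m · (ℓ! · (2m)! · g! / m!) · Ω ∧ Ω′. (This is the wedge-product form of the push-forward identity (p₂)_*(θ_N^ℓ η^{2m}) = (ℓ!(2m)!/m!)(−θ_d)^m used in the Grothendieck–Riemann–Roch computation.) -/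
/-! Let `V` be the free `ℚ`-module with basis `a₁,…,a_g, b₁,…,b_g, a′₁,…,a′_g, b′₁,…,b′_g`,
realized as `(Fin 4 × Fin g) → ℚ` where the first index `0,1,2,3` selects the family
`a, b, a′, b′` respectively. -/

/-- The basis generators `a i = gen g 0 i`, `b i = gen g 1 i`, `a′ i = gen g 2 i`,
`b′ i = gen g 3 i` inside the exterior algebra `Λ(V)`. -/
noncomputable def gen (g : ℕ) (j : Fin 4) (i : Fin g) :
    ExteriorAlgebra ℚ ((Fin 4 × Fin g) → ℚ) :=
  ExteriorAlgebra.ι ℚ (Pi.single (j, i) 1)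

/-- `θ = Σᵢ aᵢ ∧ bᵢ`. -/
noncomputable def theta (g : ℕ) : ExteriorAlgebra ℚ ((Fin 4 × Fin g) → ℚ) :=
  ∑ i : Fin g, gen g 0 i * gen g 1 i

/-- `θ′ = Σᵢ a′ᵢ ∧ b′ᵢ`. -/
noncomputable def theta' (g : ℕ) : ExteriorAlgebra ℚ ((Fin 4 × Fin g) → ℚ) :=
  ∑ i : Fin g, gen g 2 i * gen g 3 i

/-- `η = Σᵢ (aᵢ ∧ b′ᵢ + a′ᵢ ∧ bᵢ)`. -/
noncomputable def eta (g : ℕ) : ExteriorAlgebra ℚ ((Fin 4 × Fin g) → ℚ) :=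
  ∑ i : Fin g, (gen g 0 i * gen g 3 i + gen g 2 i * gen g 1 i)

/-- `Ω = a₁ ∧ b₁ ∧ ⋯ ∧ a_g ∧ b_g`. -/
noncomputable def Omega (g : ℕ) : ExteriorAlgebra ℚ ((Fin 4 × Fin g) → ℚ) :=
  ((List.finRange g).map (fun i => gen g 0 i * gen g 1 i)).prod

/-- `Ω′ = a′₁ ∧ b′₁ ∧ ⋯ ∧ a′_g ∧ b′_g`. -/
noncomputable def Omega' (g : ℕ) : ExteriorAlgebra ℚ ((Fin 4 × Fin g) → ℚ) :=
  ((List.finRange g).map (fun i => gen g 2 i * gen g 3 i)).prod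

/-! The elements aᵢbᵢ, a′ᵢb′ᵢ, aᵢb′ᵢ, a′ᵢbᵢ are products of two vectors, hence all lie in a
commutative subalgebra of Λ(V), where each of them squares to zero. For commuting square-zero
xᵢ one has (∑ xᵢ)ⁿ = n! ∑_{|S| = n} ∏_{i ∈ S} xᵢ. Expand θ^ℓ this way. The monomial
∏_{i ∈ S} aᵢbᵢ kills every term of η with index in S, so η^{2m} only sees the m indices of Sᶜ,
where it reduces to (2m)! ∏_{i ∉ S} (aᵢb′ᵢ)(a′ᵢbᵢ) = (2m)! (-1)^m ∏_{i ∉ S} (aᵢbᵢ)(a′ᵢb′ᵢ). What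
is left kills every a′ᵢb′ᵢ with i ∉ S, so θ′^ℓ contributes ℓ! ∏_{i ∈ S} a′ᵢb′ᵢ. Each of the
C(g, ℓ) sets S thus contributes ℓ! · (-1)^m (2m)! ℓ! · Ω Ω′, and ℓ! C(g, ℓ) = g!/m!. -/

open scoped IsMulCommutative

open Finset Nat

section SquareZero

variable {R : Type*} [CommRing R] {ι : Type*}

theorem add_pow_succ_of_mul_self_eq_zero {x y : R} (hx : x * x = 0) (n : ℕ) :
    (x + y) ^ (n + 1) = y ^ (n + 1) + (n + 1) * x * y ^ n := by
  induction n with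
  | zero => ring
  | succ n ih =>
    rw [pow_succ, ih]
    push_cast
    linear_combination ((n : R) + 1) * y ^ n * hx

theorem sum_pow_of_mul_self_eq_zero [DecidableEq ι] {x : ι → R} {s : Finset ι}
    (hx : ∀ i, x i * x i = 0) (n : ℕ) :
    (∑ i ∈ s, x i) ^ n = n ! * ∑ S ∈ s.powersetCard n, ∏ i ∈ S, x i := by
  induction s using Finset.induction_on generalizing n with
  | empty =>
    cases n with
    | zero => simp
    | succ n => simp [powersetCard_eq_empty.2 (by simp : #(∅ : Finset ι) < n + 1)]
  | insert a s ha ih =>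
    have ha' : ∀ {k S}, S ∈ s.powersetCard k → a ∉ S :=
      fun hS h => ha ((mem_powersetCard.1 hS).1 h)
    cases n with
    | zero => simp
    | succ n =>
      have hsum : ∑ S ∈ (insert a s).powersetCard (n + 1), ∏ i ∈ S, x i =
          ∑ S ∈ s.powersetCard (n + 1), ∏ i ∈ S, x i +
            x a * ∑ S ∈ s.powersetCard n, ∏ i ∈ S, x i := by
        rw [powersetCard_succ_insert ha, sum_union, sum_image, mul_sum]
        · exact congrArg _ (sum_congr rfl fun S hS => prod_insert (ha' hS))
        · intro S hS T hT hST
          rw [← erase_insert (ha' hS), ← erase_insert (ha' hT)]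
          exact congrArg (·.erase a) hST
        · refine disjoint_left.2 fun S hS hS' => ?_
          obtain ⟨T, -, rfl⟩ := mem_image.1 hS'
          exact ha ((mem_powersetCard.1 hS).1 (mem_insert_self a T))
      rw [sum_insert ha, add_pow_succ_of_mul_self_eq_zero (hx a), ih, ih, hsum, factorial_succ]
      push_cast
      ring

theorem sum_pow_card_of_mul_self_eq_zero [DecidableEq ι] {x : ι → R} (hx : ∀ i, x i * x i = 0)
    (s : Finset ι) : (∑ i ∈ s, x i) ^ #s = (#s)! * ∏ i ∈ s, x i := by
  rw [sum_pow_of_mul_self_eq_zero hx, powersetCard_self, sum_singleton]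

theorem sum_pow_eq_zero_of_card_lt [DecidableEq ι] {x : ι → R} (hx : ∀ i, x i * x i = 0)
    {s : Finset ι} {n : ℕ} (hn : #s < n) : (∑ i ∈ s, x i) ^ n = 0 := by
  rw [sum_pow_of_mul_self_eq_zero hx, powersetCard_eq_empty.2 hn, sum_empty, mul_zero]

theorem mul_add_pow_of_mul_eq_zero {a u v : R} (h : a * v = 0) (n : ℕ) :
    a * (u + v) ^ n = a * u ^ n := by
  induction n with
  | zero => simp
  | succ n ih =>
    rw [pow_succ, ← mul_assoc, ih]
    linear_combination u ^ n * h

theorem prod_mul_eq_zero_of_mem [DecidableEq ι] {x : ι → R} {S : Finset ι} {i : ι} {y : R}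
    (hi : i ∈ S) (h : x i * y = 0) : (∏ j ∈ S, x j) * y = 0 := by
  rw [← mul_prod_erase S x hi, mul_right_comm, h, zero_mul]

theorem mul_sum_pow_eq_mul_sum_compl_pow [Fintype ι] [DecidableEq ι] {a : R} {x : ι → R}
    {T : Finset ι} (h : ∀ i ∈ T, a * x i = 0) (n : ℕ) :
    a * (∑ i, x i) ^ n = a * (∑ i ∈ Tᶜ, x i) ^ n := by
  rw [← sum_add_sum_compl T x, add_comm,
    mul_add_pow_of_mul_eq_zero (by rw [mul_sum]; exact sum_eq_zero h)]

theorem sum_add_pow_two_mul_card [DecidableEq ι] {p q : ι → R} (hp : ∀ i, p i * p i = 0)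
    (hq : ∀ i, q i * q i = 0) (c : Finset ι) :
    (∑ i ∈ c, (p i + q i)) ^ (2 * #c) = (2 * #c)! * ∏ i ∈ c, p i * q i := by
  rw [sum_add_distrib, add_pow, sum_eq_single #c]
  · rw [two_mul, Nat.add_sub_cancel, sum_pow_card_of_mul_self_eq_zero hp,
      sum_pow_card_of_mul_self_eq_zero hq, prod_mul_distrib,
      ← Nat.add_choose_mul_factorial_mul_factorial]
    push_cast
    ring
  · intro k _ hk
    rcases lt_or_gt_of_ne hk with hlt | hgt
    · rw [sum_pow_eq_zero_of_card_lt hq (by omega), mul_zero, zero_mul]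
    · rw [sum_pow_eq_zero_of_card_lt hp hgt, zero_mul, zero_mul]
  · exact fun h => absurd (mem_range.2 (by omega)) h

end SquareZero

section Blocks

variable {R : Type*} [CommRing R] {ι : Type*} [Fintype ι] [DecidableEq ι] {t t' p q : ι → R}

theorem prod_mul_sum_add_pow_mul_sum_pow (ht' : ∀ i, t' i * t' i = 0)
    (hp : ∀ i, p i * p i = 0) (hq : ∀ i, q i * q i = 0)
    (htp : ∀ i, t i * p i = 0) (htq : ∀ i, t i * q i = 0)
    (hpq : ∀ i, p i * q i = -(t i * t' i)) (S : Finset ι) :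
    (∏ i ∈ S, t i) * (∑ i, (p i + q i)) ^ (2 * #Sᶜ) * (∑ i, t' i) ^ #S =
      ((-1) ^ #Sᶜ * (2 * #Sᶜ)! * (#S)!) * ∏ i, t i * t' i := by
  have hη : (∏ i ∈ S, t i) * (∑ i, (p i + q i)) ^ (2 * #Sᶜ) =
      (-1) ^ #Sᶜ * (2 * #Sᶜ)! * ((∏ i ∈ S, t i) * ∏ i ∈ Sᶜ, t i * t' i) := by
    rw [mul_sum_pow_eq_mul_sum_compl_pow fun i hi =>
        prod_mul_eq_zero_of_mem hi (by rw [mul_add, htp, htq, add_zero]),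
      sum_add_pow_two_mul_card hp hq, prod_congr rfl fun i _ => hpq i, prod_neg]
    ring
  have hθ' : ((∏ i ∈ S, t i) * ∏ i ∈ Sᶜ, t i * t' i) * (∑ i, t' i) ^ #S =
      (#S)! * ((∏ i ∈ S, t i) * ∏ i ∈ Sᶜ, t i * t' i) * ∏ i ∈ S, t' i := by
    rw [mul_sum_pow_eq_mul_sum_compl_pow (T := Sᶜ) fun i hi => by
        rw [mul_assoc, prod_mul_eq_zero_of_mem hi (by rw [mul_assoc, ht', mul_zero]), mul_zero],
      compl_compl, sum_pow_card_of_mul_self_eq_zero ht']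
    ring
  rw [hη, mul_assoc _ _ (_ ^ _), hθ', ← prod_mul_prod_compl S, prod_mul_distrib (s := S)]
  ring

theorem sum_pow_mul_sum_add_pow_mul_sum_pow (ht : ∀ i, t i * t i = 0)
    (ht' : ∀ i, t' i * t' i = 0) (hp : ∀ i, p i * p i = 0) (hq : ∀ i, q i * q i = 0)
    (htp : ∀ i, t i * p i = 0) (htq : ∀ i, t i * q i = 0)
    (hpq : ∀ i, p i * q i = -(t i * t' i)) {ℓ m : ℕ} (h : ℓ + m = Fintype.card ι) :
    (∑ i, t i) ^ ℓ * (∑ i, (p i + q i)) ^ (2 * m) * (∑ i, t' i) ^ ℓ =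
      ((-1) ^ m * (2 * m)! * ℓ ! * ℓ ! * (Fintype.card ι).choose ℓ) * ∏ i, t i * t' i := by
  have hS : ∀ S ∈ powersetCard ℓ univ, (∏ i ∈ S, t i) *
      ((∑ i, (p i + q i)) ^ (2 * m) * (∑ i, t' i) ^ ℓ) =
        ((-1) ^ m * (2 * m)! * ℓ !) * ∏ i, t i * t' i := by
    intro S hS
    have hSℓ : #S = ℓ := (mem_powersetCard.1 hS).2
    have hScm : #Sᶜ = m := by rw [card_compl]; omega
    rw [← mul_assoc, ← hSℓ, ← hScm]
    exact prod_mul_sum_add_pow_mul_sum_pow ht' hp hq htp htq hpq S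
  rw [sum_pow_of_mul_self_eq_zero ht, mul_assoc, mul_assoc, sum_mul, sum_congr rfl hS,
    sum_const, card_powersetCard, Finset.card_univ, nsmul_eq_mul]
  ring

end Blocks

namespace ExteriorAlgebra

open CliffordAlgebra

variable {R M : Type*} [CommRing R] [AddCommGroup M] [Module R M]

theorem commute_ι_mul_ι_ι (x y z : M) : Commute (ι R x * ι R y) (ι R z) := by
  rw [Commute, SemiconjBy, mul_assoc, ι_mul_ι_comm_of_isOrtho (.all y z), mul_neg, ← mul_assoc,
    ι_mul_ι_comm_of_isOrtho (.all x z), neg_mul, neg_neg, mul_assoc]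

theorem commute_ι_mul_ι (x y z w : M) : Commute (ι R x * ι R y) (ι R z * ι R w) :=
  (commute_ι_mul_ι_ι x y z).mul_right (commute_ι_mul_ι_ι x y w)

theorem ι_mul_ι_mul_ι_self (x y : M) : ι R x * ι R y * ι R x = 0 := by
  rw [(commute_ι_mul_ι_ι (R := R) x y x).eq, ← mul_assoc, ι_sq_zero, zero_mul]

variable (R M) in
def bivectors : Set (ExteriorAlgebra R M) := {a | ∃ x y : M, ι R x * ι R y = a}

instance : IsMulCommutative (Algebra.adjoin R (bivectors R M)) :=
  Algebra.isMulCommutative_adjoin R <| by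
    rintro _ ⟨x, y, rfl⟩ _ ⟨z, w, rfl⟩
    exact (commute_ι_mul_ι x y z w).eq

variable (R) in
def bivector (x y : M) : Algebra.adjoin R (bivectors R M) :=
  ⟨ι R x * ι R y, Algebra.subset_adjoin ⟨x, y, rfl⟩⟩

theorem bivector_mul_bivector_same_fst (x y z : M) : bivector R x y * bivector R x z = 0 :=
  Subtype.ext <| show ι R x * ι R y * (ι R x * ι R z) = 0 by
    rw [← mul_assoc, ι_mul_ι_mul_ι_self, zero_mul]

theorem bivector_mul_bivector_same_snd (x y z : M) : bivector R x y * bivector R z y = 0 :=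
  Subtype.ext <| show ι R x * ι R y * (ι R z * ι R y) = 0 by
    rw [mul_assoc, ← mul_assoc (ι R y), ι_mul_ι_mul_ι_self, mul_zero]

theorem bivector_mul_bivector_swap_snd (x y z w : M) :
    bivector R x w * bivector R z y = -(bivector R x y * bivector R z w) :=
  Subtype.ext <| show ι R x * ι R w * (ι R z * ι R y) = -(ι R x * ι R y * (ι R z * ι R w)) by
    rw [mul_assoc, ← (commute_ι_mul_ι_ι (R := R) z y w).eq, ι_mul_ι_comm_of_isOrtho (.all z y)]
    noncomm_ring

end ExteriorAlgebra

open ExteriorAlgebra in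
theorem theta_pow_mul_eta_pow_mul_theta'_pow_general (g ℓ m : ℕ) (h : ℓ + m = g) :
    theta g ^ ℓ * eta g ^ (2 * m) * theta' g ^ (g - m) =
      ((-1 : ℚ) ^ m *
          ((ℓ.factorial * (2 * m).factorial * g.factorial : ℚ) / m.factorial)) •
        (Omega g * Omega' g) := by
  let e : Fin 4 → Fin g → (Fin 4 × Fin g → ℚ) := fun j i => Pi.single (j, i) 1
  have key := congrArg (Algebra.adjoin ℚ (bivectors ℚ (Fin 4 × Fin g → ℚ))).val <|
    sum_pow_mul_sum_add_pow_mul_sum_pow (t := fun i => bivector ℚ (e 0 i) (e 1 i))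
      (t' := fun i => bivector ℚ (e 2 i) (e 3 i)) (p := fun i => bivector ℚ (e 0 i) (e 3 i))
      (q := fun i => bivector ℚ (e 2 i) (e 1 i))
      (fun _ => bivector_mul_bivector_same_fst ..) (fun _ => bivector_mul_bivector_same_fst ..)
      (fun _ => bivector_mul_bivector_same_fst ..) (fun _ => bivector_mul_bivector_same_fst ..)
      (fun _ => bivector_mul_bivector_same_fst ..) (fun _ => bivector_mul_bivector_same_snd ..)
      (fun _ => bivector_mul_bivector_swap_snd ..) (h.trans (Fintype.card_fin g).symm)
  simp only [map_mul, map_pow, map_sum, map_add, map_natCast, map_neg, map_one, prod_mul_distrib,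
    Fin.prod_univ_def, map_list_prod, List.map_map, Fintype.card_fin] at key
  have hq : (-1 : ℚ) ^ m * ((ℓ ! * (2 * m)! * g ! : ℚ) / m !) =
      (-1) ^ m * (2 * m)! * ℓ ! * ℓ ! * (g.choose ℓ : ℕ) := by
    rw [← Nat.choose_mul_factorial_mul_factorial (show ℓ ≤ g by omega), show g - ℓ = m by omega]
    push_cast
    field_simp
  rw [show g - m = ℓ by omega, Algebra.smul_def, hq]
  simp only [map_mul, map_pow, map_neg, map_one, map_natCast]
  -- `key` is the goal with `theta`, `eta`, `theta'`, `Omega`, `Omega'` unfolded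
  exact key

/-- For `ℓ + m = g`, one has
`θ^ℓ ∧ η^(2m) ∧ θ′^(g-m) = (-1)^m · (ℓ!·(2m)!·g!/m!) · Ω ∧ Ω′`. -/
theorem theta_pow_mul_eta_pow_mul_theta'_pow (g ℓ m : ℕ) (hg : 1 ≤ g) (h : ℓ + m = g) :
    theta g ^ ℓ * eta g ^ (2 * m) * theta' g ^ (g - m) =
      ((-1 : ℚ) ^ m *
          ((ℓ.factorial * (2 * m).factorial * g.factorial : ℚ) / m.factorial)) •
        (Omega g * Omega' g) :=
  theta_pow_mul_eta_pow_mul_theta'_pow_general g ℓ m h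
end

section
/- Let ℓ, m, k ≥ 0 be integers with ℓ + (2m+1) + k = 2g. Then in the exterior algebra Λ(V) one has θ^ℓ ∧ η^{2m+1} ∧ (θ′)^{k} = 0; in other words, any top-degree wedge product involving an odd power of the mixed class η vanishes. -/
/-! The automorphism of `Λ(V)` induced by negating every `a′ᵢ, b′ᵢ` fixes `θ` and `θ′` and
negates `η`, hence negates `θ^ℓ η^(2m+1) θ′^k`. That product has top degree `4g`, where the
automorphism acts by its determinant `(-1)^(2g) = 1`; so the product equals its own negative and
vanishes over `ℚ`. -/

open ExteriorAlgebra

section Eigenvectors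

variable {R M ι : Type*} [CommRing R] [AddCommGroup M] [Module R M]
  {f : M →ₗ[R] M} {b : ι → M} {d : ι → R}

theorem ExteriorAlgebra.map_ιMulti_comp_of_eigenvectors (hf : ∀ i, f (b i) = d i • b i)
    {n : ℕ} (r : Fin n → ι) :
    map f (ιMulti R n (b ∘ r)) = (∏ t, d (r t)) • ιMulti R n (b ∘ r) := by
  rw [map_apply_ιMulti, ← AlternatingMap.map_smul_univ]
  congr 1
  funext t
  exact hf (r t)

theorem ExteriorAlgebra.map_eq_prod_smul_of_mem_exteriorPower_card [Fintype ι]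
    (hf : ∀ i, f (b i) = d i • b i) (hb : Submodule.span R (Set.range b) = ⊤)
    {x : ExteriorAlgebra R M} (hx : x ∈ ⋀[R]^(Fintype.card ι) M) :
    map f x = (∏ i, d i) • x := by
  rw [← exteriorPower.ιMulti_span_fixedDegree_of_span_eq_top R _ M hb] at hx
  induction hx using Submodule.span_induction with
  | mem y hy =>
    obtain ⟨v, hv, rfl⟩ := hy
    obtain ⟨r, rfl⟩ : ∃ r : Fin (Fintype.card ι) → ι, b ∘ r = v :=
      ⟨fun t => (hv ⟨t, rfl⟩).choose, funext fun t => (hv ⟨t, rfl⟩).choose_spec⟩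
    rw [map_ιMulti_comp_of_eigenvectors hf]
    by_cases hr : Function.Injective r
    · have hbij : Function.Bijective r :=
        (Fintype.bijective_iff_injective_and_card r).2 ⟨hr, by simp⟩
      rw [Fintype.prod_bijective r hbij _ d fun _ => rfl]
    · rw [AlternatingMap.map_eq_zero_of_not_injective _ _ fun h => hr h.of_comp, smul_zero,
        smul_zero]
  | zero => simp
  | add x y _ _ hx hy => rw [map_add, hx, hy, smul_add]
  | smul c x _ hx => rw [map_smul, hx, smul_comm]

end Eigenvectors

theorem Matrix.toLin'_diagonal_single {R ι : Type*} [CommSemiring R] [Fintype ι] [DecidableEq ι]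
    (d : ι → R) (i : ι) :
    Matrix.toLin' (Matrix.diagonal d) (Pi.single i 1) = d i • Pi.single i 1 := by
  rw [Matrix.toLin'_apply, Matrix.diagonal_mulVec_single, ← smul_eq_mul, Pi.single_smul']

/-- `+1` on the unprimed generators `a, b`, `-1` on the primed ones `a′, b′`. -/
def primedSign (g : ℕ) (p : Fin 4 × Fin g) : ℚ := if (p.1 : ℕ) < 2 then 1 else -1

noncomputable def negatePrimed (g : ℕ) :
    ExteriorAlgebra ℚ ((Fin 4 × Fin g) → ℚ) →ₐ[ℚ] ExteriorAlgebra ℚ ((Fin 4 × Fin g) → ℚ) :=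
  map (Matrix.toLin' (Matrix.diagonal (primedSign g)))

theorem negatePrimed_gen (g : ℕ) (j : Fin 4) (i : Fin g) :
    negatePrimed g (gen g j i) = primedSign g (j, i) • gen g j i := by
  rw [negatePrimed, gen, map_apply_ι, Matrix.toLin'_diagonal_single, map_smul]

theorem negatePrimed_theta (g : ℕ) : negatePrimed g (theta g) = theta g := by
  simp [theta, negatePrimed_gen, primedSign]

theorem negatePrimed_theta' (g : ℕ) : negatePrimed g (theta' g) = theta' g := by
  simp [theta', negatePrimed_gen, primedSign]

theorem negatePrimed_eta (g : ℕ) : negatePrimed g (eta g) = -eta g := by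
  simp only [eta, map_sum, map_add, map_mul, negatePrimed_gen, ← Finset.sum_neg_distrib]
  refine Finset.sum_congr rfl fun i _ => ?_
  simp [primedSign, add_comm]

theorem prod_primedSign (g : ℕ) : ∏ p, primedSign g p = 1 := by
  simp [Fintype.prod_prod_type, Fin.prod_univ_four, primedSign, ← mul_pow]

theorem negatePrimed_eq_self_of_mem_exteriorPower {g : ℕ}
    {x : ExteriorAlgebra ℚ ((Fin 4 × Fin g) → ℚ)} (hx : x ∈ ⋀[ℚ]^(4 * g) ((Fin 4 × Fin g) → ℚ)) :
    negatePrimed g x = x := by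
  have hb :
      Submodule.span ℚ (Set.range fun p : Fin 4 × Fin g => (Pi.single p 1 : _ → ℚ)) = ⊤ := by
    rw [← (Pi.basisFun ℚ _).span_eq, ← funext (Pi.basisFun_apply ℚ _)]
  rw [negatePrimed,
    map_eq_prod_smul_of_mem_exteriorPower_card (Matrix.toLin'_diagonal_single _) hb
      (by simpa using hx),
    prod_primedSign, one_smul]

theorem gen_mul_gen_mem_exteriorPower_two (g : ℕ) (j j' : Fin 4) (i i' : Fin g) :
    gen g j i * gen g j' i' ∈ ⋀[ℚ]^2 ((Fin 4 × Fin g) → ℚ) :=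
  SetLike.mul_mem_graded (i := 1) (j := 1) (by simp [gen]) (by simp [gen])

theorem theta_mem_exteriorPower_two (g : ℕ) : theta g ∈ ⋀[ℚ]^2 ((Fin 4 × Fin g) → ℚ) :=
  Submodule.sum_mem _ fun _ _ => gen_mul_gen_mem_exteriorPower_two g _ _ _ _

theorem theta'_mem_exteriorPower_two (g : ℕ) : theta' g ∈ ⋀[ℚ]^2 ((Fin 4 × Fin g) → ℚ) :=
  Submodule.sum_mem _ fun _ _ => gen_mul_gen_mem_exteriorPower_two g _ _ _ _

theorem eta_mem_exteriorPower_two (g : ℕ) : eta g ∈ ⋀[ℚ]^2 ((Fin 4 × Fin g) → ℚ) :=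
  Submodule.sum_mem _ fun _ _ => Submodule.add_mem _
    (gen_mul_gen_mem_exteriorPower_two g _ _ _ _) (gen_mul_gen_mem_exteriorPower_two g _ _ _ _)

theorem theta_pow_mul_eta_odd_pow_mul_theta'_pow_eq_zero_general (g ℓ m k : ℕ)
    (h : ℓ + (2 * m + 1) + k = 2 * g) :
    theta g ^ ℓ * eta g ^ (2 * m + 1) * theta' g ^ k = 0 := by
  set x := theta g ^ ℓ * eta g ^ (2 * m + 1) * theta' g ^ k
  have hx : x ∈ ⋀[ℚ]^(4 * g) ((Fin 4 × Fin g) → ℚ) := by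
    rw [show 4 * g = ℓ • 2 + (2 * m + 1) • 2 + k • 2 by simp only [smul_eq_mul]; omega]
    exact SetLike.mul_mem_graded
      (SetLike.mul_mem_graded (SetLike.pow_mem_graded _ (theta_mem_exteriorPower_two g))
        (SetLike.pow_mem_graded _ (eta_mem_exteriorPower_two g)))
      (SetLike.pow_mem_graded _ (theta'_mem_exteriorPower_two g))
  have hneg : negatePrimed g x = -x := by
    simp only [x, map_mul, map_pow, negatePrimed_theta, negatePrimed_eta, negatePrimed_theta',
      Odd.neg_pow (odd_two_mul_add_one m), mul_neg, neg_mul]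
  have := IsAddTorsionFree.of_module_rat (M := ExteriorAlgebra ℚ ((Fin 4 × Fin g) → ℚ))
  exact self_eq_neg.mp ((negatePrimed_eq_self_of_mem_exteriorPower hx).symm.trans hneg)

/-- Any top-degree wedge product involving an odd power of the mixed class `η`
vanishes: if `ℓ + (2m+1) + k = 2g` then `θ^ℓ ∧ η^(2m+1) ∧ θ′^k = 0`. -/
theorem theta_pow_mul_eta_odd_pow_mul_theta'_pow_eq_zero (g ℓ m k : ℕ) (hg : 1 ≤ g)
    (h : ℓ + (2 * m + 1) + k = 2 * g) :
    theta g ^ ℓ * eta g ^ (2 * m + 1) * theta' g ^ k = 0 :=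
  theta_pow_mul_eta_odd_pow_mul_theta'_pow_eq_zero_general g ℓ m k h
end

section
/- Let N ≥ 1, b ≥ 1, d ≥ 0 be integers and set p = d − b(N−1). Consider the ℂ-vector space of polynomials f ∈ ℂ[X₁,…,X_N] of the form f = (∏_{1≤i<j≤N}(Xᵢ − Xⱼ))^b · P with P a symmetric polynomial, subject to the condition that the degree of f in each variable Xᵢ is at most d. If p ≥ 0 this space has dimension C(N+p, p); if p < 0 this space is the zero space. (This is the genus-0 case of the rank formula for the Laughlin vector bundle, together with the genus-0 Wen–Zee vanishing.) -/
/-- The Vandermonde product `∏_{1 ≤ i < j ≤ N} (Xᵢ - Xⱼ)` in `ℂ[X₁,…,X_N]`. -/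
noncomputable def vandermondeProd (N : ℕ) : MvPolynomial (Fin N) ℂ :=
  ∏ i : Fin N, ∏ j ∈ Finset.Ioi i, (MvPolynomial.X i - MvPolynomial.X j)

/-!
Since `∏_{i<j} (Xᵢ - Xⱼ)` has degree exactly `N - 1` in every variable and `ℂ[X]` is a domain,
multiplication by its `b`-th power is injective and raises every `degreeOf` by `b (N - 1)`. The
space is therefore zero when `p < 0`, and otherwise isomorphic to the space of symmetric
polynomials of degree at most `p` in each variable. A symmetric polynomial is determined by its
coefficients at sorted exponents, and monomial symmetric polynomials realise any such coefficients,
so that dimension is the number of monotone maps `Fin N → Fin (p + 1)`, i.e. of multisets of size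
`N` drawn from `p + 1` elements: `C(N + p, p)`.
-/

open MvPolynomial Finset

section Degrees

variable {σ R : Type*} [CommRing R]

theorem MvPolynomial.mem_restrictDegree_iff_degreeOf_le {p : MvPolynomial σ R} {n : ℕ} :
    p ∈ restrictDegree σ R n ↔ ∀ i, degreeOf i p ≤ n := by
  classical
  simp only [mem_restrictDegree_iff_sup, degreeOf_def]

variable [NoZeroDivisors R] {f P : MvPolynomial σ R} {e : ℕ}

theorem MvPolynomial.mul_mem_restrictDegree_add_iff (hf : f ≠ 0) (hfe : ∀ i, degreeOf i f = e)
    (q : ℕ) : f * P ∈ restrictDegree σ R (e + q) ↔ P ∈ restrictDegree σ R q := by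
  rcases eq_or_ne P 0 with rfl | hP
  · simp only [mul_zero, Submodule.zero_mem]
  simp only [mem_restrictDegree_iff_degreeOf_le, degreeOf_mul_eq hf hP, hfe, add_le_add_iff_left]

theorem MvPolynomial.eq_zero_of_mul_mem_restrictDegree [Nonempty σ] (hf : f ≠ 0)
    (hfe : ∀ i, degreeOf i f = e) {d : ℕ} (hd : d < e) (h : f * P ∈ restrictDegree σ R d) :
    P = 0 := by
  by_contra hP
  have := mem_restrictDegree_iff_degreeOf_le.mp h (Classical.arbitrary σ)
  rw [degreeOf_mul_eq hf hP, hfe] at this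
  omega

theorem MvPolynomial.map_mulLeft_inf_restrictDegree_add (S : Submodule R (MvPolynomial σ R))
    (hf : f ≠ 0) (hfe : ∀ i, degreeOf i f = e) (q : ℕ) :
    S.map (LinearMap.mulLeft R f) ⊓ restrictDegree σ R (e + q) =
      (S ⊓ restrictDegree σ R q).map (LinearMap.mulLeft R f) := by
  ext x
  constructor
  · rintro ⟨⟨P, hPS, rfl⟩, hx⟩
    exact ⟨P, ⟨hPS, (mul_mem_restrictDegree_add_iff hf hfe q).mp hx⟩, rfl⟩
  · rintro ⟨P, ⟨hPS, hP⟩, rfl⟩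
    exact ⟨⟨P, hPS, rfl⟩, (mul_mem_restrictDegree_add_iff hf hfe q).mpr hP⟩

theorem MvPolynomial.map_mulLeft_inf_restrictDegree_eq_bot [Nonempty σ]
    (S : Submodule R (MvPolynomial σ R)) (hf : f ≠ 0) (hfe : ∀ i, degreeOf i f = e) {d : ℕ}
    (hd : d < e) : S.map (LinearMap.mulLeft R f) ⊓ restrictDegree σ R d = ⊥ := by
  refine eq_bot_iff.mpr fun x ⟨⟨P, _, hPx⟩, hx⟩ => ?_
  subst hPx
  rw [LinearMap.mulLeft_apply] at hx ⊢
  rw [eq_zero_of_mul_mem_restrictDegree hf hfe hd hx, mul_zero]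
  exact Submodule.zero_mem _

end Degrees

theorem MvPolynomial.degrees_X_sub_X {σ R : Type*} [CommRing R] [Nontrivial R] {i j : σ}
    (h : i ≠ j) : degrees (X i - X j : MvPolynomial σ R) = {i, j} := by
  classical
  have hdisj : Disjoint ({i} : Multiset σ) {j} := by simpa using h.symm
  rw [sub_eq_add_neg, degrees_add_of_disjoint] <;>
    simp [degrees_X, ← Multiset.add_eq_union_iff_disjoint.mpr hdisj, hdisj]

theorem MvPolynomial.X_sub_X_ne_zero {σ R : Type*} [CommRing R] [Nontrivial R] {i j : σ}
    (h : i ≠ j) : (X i - X j : MvPolynomial σ R) ≠ 0 :=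
  sub_ne_zero.mpr fun hX => h (X_injective hX)

theorem vandermondeProd_row_ne_zero {N : ℕ} (i : Fin N) :
    ∏ j ∈ Ioi i, (X i - X j : MvPolynomial (Fin N) ℂ) ≠ 0 :=
  prod_ne_zero_iff.mpr fun _ hj => X_sub_X_ne_zero (mem_Ioi.mp hj).ne

theorem vandermondeProd_ne_zero (N : ℕ) : vandermondeProd N ≠ 0 :=
  prod_ne_zero_iff.mpr fun i _ => vandermondeProd_row_ne_zero i

theorem degreeOf_vandermondeProd {N : ℕ} (k : Fin N) :
    degreeOf k (vandermondeProd N) = N - 1 := by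
  classical
  have hrow : ∀ i, degreeOf k (∏ j ∈ Ioi i, (X i - X j : MvPolynomial (Fin N) ℂ)) =
      ∑ j ∈ Ioi i, ((if k = i then 1 else 0) + (if k = j then 1 else 0)) := by
    intro i
    rw [degreeOf_prod_eq _ _ fun j hj => X_sub_X_ne_zero (mem_Ioi.mp hj).ne]
    refine sum_congr rfl fun j hj => ?_
    rw [degreeOf_def, degrees_X_sub_X (mem_Ioi.mp hj).ne, Multiset.insert_eq_cons,
      Multiset.count_cons, Multiset.count_singleton, add_comm]
  rw [vandermondeProd, degreeOf_prod_eq _ _ fun i _ => vandermondeProd_row_ne_zero i,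
    sum_congr rfl fun i _ => hrow i]
  simp only [sum_add_distrib, sum_ite_irrel, sum_const, Fin.card_Ioi, smul_eq_mul, mul_one,
    mul_zero, sum_ite_eq, mem_Ioi, mem_univ, if_true, sum_boole, Nat.cast_id,
    filter_gt_eq_Iio, Fin.card_Iio]
  omega

section SymmetricRestrictDegree

variable {K : Type*} [Field K] {N q : ℕ}

variable (K N q) in
noncomputable def symmetricRestrictDegree : Submodule K (MvPolynomial (Fin N) K) :=
  (symmetricSubalgebra (Fin N) K).toSubmodule ⊓ restrictDegree (Fin N) K q

noncomputable def tupleExponent (m : Fin N → Fin (q + 1)) : Fin N →₀ ℕ :=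
  Finsupp.equivFunOnFinite.symm fun i => m i

theorem tupleExponent_injective : Function.Injective (tupleExponent (N := N) (q := q)) :=
  fun _ _ h => funext fun i => Fin.ext (DFunLike.congr_fun h i)

theorem exists_tupleExponent_eq {μ : Fin N →₀ ℕ} (hμ : ∀ i, μ i ≤ q) :
    ∃ m : Fin N → Fin (q + 1), tupleExponent m = μ :=
  ⟨fun i => ⟨μ i, Nat.lt_succ_of_le (hμ i)⟩, by ext i; rfl⟩

theorem mapDomain_tupleExponent (τ : Equiv.Perm (Fin N)) (m : Fin N → Fin (q + 1)) :
    Finsupp.mapDomain τ (tupleExponent m) = tupleExponent (m ∘ τ.symm) := by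
  ext i
  exact Finsupp.mapDomain_equiv_apply _ i

theorem MvPolynomial.IsSymmetric.coeff_mapDomain {P : MvPolynomial (Fin N) K}
    (hP : P.IsSymmetric) (τ : Equiv.Perm (Fin N)) (μ : Fin N →₀ ℕ) :
    coeff (Finsupp.mapDomain τ μ) P = coeff μ P := by
  conv_lhs => rw [← hP τ]
  exact coeff_rename_mapDomain τ τ.injective P μ

theorem MvPolynomial.IsSymmetric.coeff_tupleExponent_comp {P : MvPolynomial (Fin N) K}
    (hP : P.IsSymmetric) (m : Fin N → Fin (q + 1)) (τ : Equiv.Perm (Fin N)) :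
    coeff (tupleExponent (m ∘ τ)) P = coeff (tupleExponent m) P := by
  rw [← hP.coeff_mapDomain τ, mapDomain_tupleExponent, Function.comp_assoc, τ.self_comp_symm,
    Function.comp_id]

variable (K) in
noncomputable def monomialSymmetric (g : Fin N → Fin (q + 1)) : MvPolynomial (Fin N) K :=
  ∑ m with m ∘ Tuple.sort m = g, monomial (tupleExponent m) 1

theorem coeff_tupleExponent_monomialSymmetric (g m : Fin N → Fin (q + 1)) :
    coeff (tupleExponent m) (monomialSymmetric K g) = if m ∘ Tuple.sort m = g then 1 else 0 := by
  simp [monomialSymmetric, coeff_sum, coeff_monomial, tupleExponent_injective.eq_iff]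

theorem monomialSymmetric_isSymmetric (g : Fin N → Fin (q + 1)) :
    (monomialSymmetric K g).IsSymmetric := by
  intro τ
  simp only [monomialSymmetric, map_sum, rename_monomial, mapDomain_tupleExponent]
  refine sum_nbij' (· ∘ τ.symm) (· ∘ τ) ?_ ?_ ?_ ?_ fun _ _ => rfl
  · simp [Tuple.comp_perm_comp_sort_eq_comp_sort]
  · simp [Tuple.comp_perm_comp_sort_eq_comp_sort]
  · simp [Function.comp_assoc]
  · simp [Function.comp_assoc]

theorem monomialSymmetric_mem_restrictDegree (g : Fin N → Fin (q + 1)) :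
    monomialSymmetric K g ∈ restrictDegree (Fin N) K q :=
  Submodule.sum_mem _ fun m _ => (monomial_mem_restrictSupport K).mpr <|
    .inl fun i => Nat.lt_succ_iff.mp (m i).isLt

theorem coeff_tupleExponent_monomialSymmetric_of_monotone {g' : Fin N → Fin (q + 1)}
    (hg' : Monotone g') (g : Fin N → Fin (q + 1)) :
    coeff (tupleExponent g') (monomialSymmetric K g) = if g' = g then 1 else 0 := by
  rw [coeff_tupleExponent_monomialSymmetric, (Tuple.sort_eq_refl_iff_monotone.mpr hg'),
    Equiv.coe_refl, Function.comp_id]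

theorem monomialSymmetric_mem (g : Fin N → Fin (q + 1)) :
    monomialSymmetric K g ∈ symmetricRestrictDegree K N q :=
  ⟨monomialSymmetric_isSymmetric g, monomialSymmetric_mem_restrictDegree g⟩

theorem eq_zero_of_coeff_tupleExponent_monotone {P : MvPolynomial (Fin N) K}
    (hP : P ∈ symmetricRestrictDegree K N q)
    (hcoeff : ∀ g : Fin N → Fin (q + 1), Monotone g → coeff (tupleExponent g) P = 0) : P = 0 := by
  ext μ
  rw [coeff_zero]
  by_contra hμ
  obtain ⟨m, rfl⟩ := exists_tupleExponent_eq ((mem_restrictDegree _ _ _).mp hP.2 μ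
    (mem_support_iff.mpr hμ))
  rw [← (hP.1 : P.IsSymmetric).coeff_tupleExponent_comp m (Tuple.sort m)] at hμ
  exact hμ (hcoeff _ (Tuple.monotone_sort m))

variable (K N q) in
theorem finrank_symmetricRestrictDegree :
    Module.finrank K (symmetricRestrictDegree K N q) =
      Nat.card {g : Fin N → Fin (q + 1) // Monotone g} := by
  classical
  let Φ : symmetricRestrictDegree K N q →ₗ[K] ({g : Fin N → Fin (q + 1) // Monotone g} → K) :=
    LinearMap.pi fun g => (lcoeff K (tupleExponent g.1)).comp (Submodule.subtype _)
  have hinj : Function.Injective Φ := (injective_iff_map_eq_zero Φ).mpr fun P hP =>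
    Subtype.ext <| eq_zero_of_coeff_tupleExponent_monotone P.2 fun g hg => congr_fun hP ⟨g, hg⟩
  have hsurj : Function.Surjective Φ := fun c => by
    refine ⟨∑ g, c g • ⟨monomialSymmetric K g.1, monomialSymmetric_mem g.1⟩, funext fun g' => ?_⟩
    simp [Φ, coeff_tupleExponent_monomialSymmetric_of_monotone g'.2, Subtype.coe_inj]
  rw [(LinearEquiv.ofBijective Φ ⟨hinj, hsurj⟩).finrank_eq, Module.finrank_fintype_fun_eq_card,
    Nat.card_eq_fintype_card]

end SymmetricRestrictDegree

theorem natCard_monotone_eq_natCard_sym (α : Type*) [LinearOrder α] (n : ℕ) :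
    Nat.card {g : Fin n → α // Monotone g} = Nat.card (Sym α n) := by
  refine Nat.card_eq_of_bijective (fun g => ⟨List.ofFn g.1, by simp⟩) ⟨?_, ?_⟩
  · rintro ⟨g, hg⟩ ⟨g', hg'⟩ h
    have hperm := Multiset.coe_eq_coe.mp (congrArg Subtype.val h)
    exact Subtype.ext <| List.ofFn_injective <|
      hperm.eq_of_sortedLE hg.sortedLE_ofFn hg'.sortedLE_ofFn
  · rintro ⟨s, hs⟩
    obtain ⟨l, rfl⟩ := Quotient.exists_rep s
    obtain rfl : l.length = n := by simpa using hs
    refine ⟨⟨l.get ∘ Tuple.sort l.get, Tuple.monotone_sort l.get⟩, Subtype.ext ?_⟩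
    simpa using Multiset.coe_eq_coe.mpr ((Tuple.sort l.get).ofFn_comp_perm l.get)

theorem natCard_monotone_fin_fin_succ (n q : ℕ) :
    Nat.card {g : Fin n → Fin (q + 1) // Monotone g} = (n + q).choose q := by
  rw [natCard_monotone_eq_natCard_sym, Sym.natCard_sym_eq_multichoose, Nat.multichoose_eq,
    Nat.card_eq_fintype_card, Fintype.card_fin, add_right_comm, Nat.add_sub_cancel,
    add_comm, Nat.choose_symm_add]

theorem finrank_laughlin_space_genus_zero_general (N b d : ℕ) (hN : 1 ≤ N)
    (p : ℤ) (hp : p = (d : ℤ) - (b : ℤ) * ((N : ℤ) - 1)) :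
    (0 ≤ p →
      Module.finrank ℂ
        ↥(Submodule.map (LinearMap.mulLeft ℂ (vandermondeProd N ^ b))
            (MvPolynomial.symmetricSubalgebra (Fin N) ℂ).toSubmodule ⊓
          MvPolynomial.restrictDegree (Fin N) ℂ d) =
        (N + p.toNat).choose p.toNat) ∧
    (p < 0 →
      (Submodule.map (LinearMap.mulLeft ℂ (vandermondeProd N ^ b))
          (MvPolynomial.symmetricSubalgebra (Fin N) ℂ).toSubmodule ⊓
        MvPolynomial.restrictDegree (Fin N) ℂ d) = ⊥) := by
  have hV := vandermondeProd_ne_zero N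
  have hVb : vandermondeProd N ^ b ≠ 0 := pow_ne_zero b hV
  have hdeg : ∀ i, degreeOf i (vandermondeProd N ^ b) = b * (N - 1) := fun i => by
    rw [degreeOf_pow_eq _ _ _ hV, degreeOf_vandermondeProd]
  have hcast : ((b * (N - 1) : ℕ) : ℤ) = b * ((N : ℤ) - 1) := by push_cast [Nat.cast_sub hN]; ring
  refine ⟨fun hp0 => ?_, fun hp0 => ?_⟩
  · obtain rfl : d = b * (N - 1) + p.toNat := by omega
    rw [map_mulLeft_inf_restrictDegree_add _ hVb hdeg,
      ← (Submodule.equivMapOfInjective _ (mul_right_injective₀ hVb) _).finrank_eq]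
    exact (finrank_symmetricRestrictDegree ℂ N p.toNat).trans (natCard_monotone_fin_fin_succ _ _)
  · have : Nonempty (Fin N) := ⟨⟨0, hN⟩⟩
    exact map_mulLeft_inf_restrictDegree_eq_bot _ hVb hdeg (by omega)

/-- Let `N ≥ 1`, `b ≥ 1`, `d ≥ 0` and `p = d - b(N-1)`.  The space of polynomials
`f ∈ ℂ[X₁,…,X_N]` of the form `f = (∏_{i<j}(Xᵢ - Xⱼ))^b · P` with `P` symmetric,
whose degree in each variable is at most `d`, has dimension `C(N+p, p)` if
`p ≥ 0`, and is the zero space if `p < 0`. -/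
theorem finrank_laughlin_space_genus_zero (N b d : ℕ) (hN : 1 ≤ N) (hb : 1 ≤ b)
    (p : ℤ) (hp : p = (d : ℤ) - (b : ℤ) * ((N : ℤ) - 1)) :
    (0 ≤ p →
      Module.finrank ℂ
        ↥(Submodule.map (LinearMap.mulLeft ℂ (vandermondeProd N ^ b))
            (MvPolynomial.symmetricSubalgebra (Fin N) ℂ).toSubmodule ⊓
          MvPolynomial.restrictDegree (Fin N) ℂ d) =
        (N + p.toNat).choose p.toNat) ∧
    (p < 0 →
      (Submodule.map (LinearMap.mulLeft ℂ (vandermondeProd N ^ b))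
          (MvPolynomial.symmetricSubalgebra (Fin N) ℂ).toSubmodule ⊓
        MvPolynomial.restrictDegree (Fin N) ℂ d) = ⊥) :=
  finrank_laughlin_space_genus_zero_general N b d hN p hp
end
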